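/- Let (δ, v, ϖ) be feasible for the penalized formulation (R). Then for every player i, the per-player deviation improvement is bounded by ϖ·|A_i|: max_{a_i ∈ A_i} u_i(a_i, δ_{-i}) − u_i(δ) ≤ ϖ · |A_i|. -/

import Mathlib

/-!
Feasibility in (R) makes `v i` an upper bound for every `u_i(a_i, δ_{-i})`, so the regret is at
most `v i - u_i(δ)`. Expected utility is linear in player `i`'s own mixed strategy, so
`u_i(δ) = ∑ δ_i(a_i) u_i(a_i, δ_{-i})`, and since `δ_i` sums to one,
`v i - u_i(δ) = ∑ δ_i(a_i) (v i - u_i(a_i, δ_{-i}))`, a sum of `|A_i|` terms each at most `ϖ`.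
-/

open Finset

variable {N : Type*} [Fintype N] [DecidableEq N] [Nonempty N]
variable {A : N → Type*} [∀ i, Fintype (A i)] [∀ i, DecidableEq (A i)]
variable [∀ i, Nonempty (A i)]

/-- `δ` is a mixed strategy profile: each `δ i` is nonnegative and sums to 1. -/
def IsMixedProfile {N : Type*} {A : N → Type*} [∀ i, Fintype (A i)]
    (δ : ∀ i, A i → ℝ) : Prop :=
  (∀ i a, 0 ≤ δ i a) ∧ ∀ i, ∑ a, δ i a = 1

/-- Expected utility of player `i` under mixed strategy profile `δ`. -/
def expUtil {N : Type*} [Fintype N] [DecidableEq N] {A : N → Type*}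
    [∀ i, Fintype (A i)] (u : N → (∀ j, A j) → ℝ) (δ : ∀ i, A i → ℝ) (i : N) : ℝ :=
  ∑ a : ∀ j, A j, (∏ j, δ j (a j)) * u i a

/-- The point-mass (pure) strategy on action `ai`. -/
def pureStrat {N : Type*} {A : N → Type*} [∀ i, DecidableEq (A i)]
    (i : N) (ai : A i) : A i → ℝ := fun b => if b = ai then 1 else 0

/-- `u_i(a_i, δ_{-i})`: expected utility of player `i` when playing the pure
action `ai` against the opponents' profile `δ_{-i}`. -/
def devUtil {N : Type*} [Fintype N] [DecidableEq N] {A : N → Type*}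
    [∀ i, Fintype (A i)] [∀ i, DecidableEq (A i)]
    (u : N → (∀ j, A j) → ℝ) (δ : ∀ i, A i → ℝ) (i : N) (ai : A i) : ℝ :=
  expUtil u (Function.update δ i (pureStrat i ai)) i

/-- Minimum of `u i` over pure action profiles. -/
noncomputable def minU {N : Type*} [Fintype N] [DecidableEq N] {A : N → Type*}
    [∀ i, Fintype (A i)] [∀ i, Nonempty (A i)]
    (u : N → (∀ j, A j) → ℝ) (i : N) : ℝ :=
  Finset.univ.inf' Finset.univ_nonempty (u i)

/-- Maximum of `u i` over pure action profiles. -/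
noncomputable def maxU {N : Type*} [Fintype N] [DecidableEq N] {A : N → Type*}
    [∀ i, Fintype (A i)] [∀ i, Nonempty (A i)]
    (u : N → (∀ j, A j) → ℝ) (i : N) : ℝ :=
  Finset.univ.sup' Finset.univ_nonempty (u i)

/-- `δ` is a Nash equilibrium. -/
def IsNashEq {N : Type*} [Fintype N] [DecidableEq N] {A : N → Type*}
    [∀ i, Fintype (A i)] (u : N → (∀ j, A j) → ℝ) (δ : ∀ i, A i → ℝ) : Prop :=
  IsMixedProfile δ ∧ ∀ (i : N) (δ' : A i → ℝ), (∀ a, 0 ≤ δ' a) → (∑ a, δ' a = 1) →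
    expUtil u (Function.update δ i δ') i ≤ expUtil u δ i

/-- `δ` is an ε-Nash equilibrium. -/
def IsEpsNashEq {N : Type*} [Fintype N] [DecidableEq N] {A : N → Type*}
    [∀ i, Fintype (A i)] (u : N → (∀ j, A j) → ℝ) (δ : ∀ i, A i → ℝ) (ε : ℝ) : Prop :=
  IsMixedProfile δ ∧ ∀ (i : N) (δ' : A i → ℝ), (∀ a, 0 ≤ δ' a) → (∑ a, δ' a = 1) →
    expUtil u (Function.update δ i δ') i ≤ expUtil u δ i + ε

/-- Feasibility for the mixed-integer formulation (P). -/
def FeasP {N : Type*} [Fintype N] [DecidableEq N] {A : N → Type*}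
    [∀ i, Fintype (A i)] [∀ i, DecidableEq (A i)] [∀ i, Nonempty (A i)]
    (u : N → (∀ j, A j) → ℝ) (δ : ∀ i, A i → ℝ) (v : N → ℝ)
    (z s : ∀ i, A i → ℝ) : Prop :=
  IsMixedProfile δ ∧ ∀ (i : N) (ai : A i),
    v i = s i ai + devUtil u δ i ai ∧
    δ i ai ≤ z i ai ∧
    s i ai ≤ (1 - z i ai) * (maxU u i - minU u i) ∧
    0 ≤ s i ai ∧ s i ai ≤ maxU u i - minU u i ∧
    minU u i ≤ v i ∧ v i ≤ maxU u i ∧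
    (z i ai = 0 ∨ z i ai = 1)

/-- Feasibility for the continuous formulation (Q). -/
def FeasQ {N : Type*} [Fintype N] [DecidableEq N] {A : N → Type*}
    [∀ i, Fintype (A i)] [∀ i, DecidableEq (A i)] [∀ i, Nonempty (A i)]
    (u : N → (∀ j, A j) → ℝ) (δ : ∀ i, A i → ℝ) (v : N → ℝ) : Prop :=
  IsMixedProfile δ ∧ ∀ (i : N) (ai : A i),
    0 ≤ v i - devUtil u δ i ai ∧
    δ i ai * (v i - devUtil u δ i ai) = 0 ∧
    minU u i ≤ v i ∧ v i ≤ maxU u i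

/-- Feasibility for the penalized formulation (R). -/
def FeasR {N : Type*} [Fintype N] [DecidableEq N] {A : N → Type*}
    [∀ i, Fintype (A i)] [∀ i, DecidableEq (A i)] [∀ i, Nonempty (A i)]
    (u : N → (∀ j, A j) → ℝ) (δ : ∀ i, A i → ℝ) (v : N → ℝ) (ϖ : ℝ) : Prop :=
  IsMixedProfile δ ∧ ∀ (i : N) (ai : A i),
    δ i ai * (v i - devUtil u δ i ai) ≤ ϖ ∧
    -(δ i ai * (v i - devUtil u δ i ai)) ≤ ϖ ∧
    0 ≤ v i - devUtil u δ i ai ∧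
    minU u i ≤ v i ∧ v i ≤ maxU u i

section

omit [Nonempty N] [∀ i, Nonempty (A i)]

omit [∀ i, Fintype (A i)] [∀ i, DecidableEq (A i)] in
lemma prod_update_apply (δ : ∀ i, A i → ℝ) (i : N) (σ : A i → ℝ) (a : ∀ j, A j) :
    ∏ j, Function.update δ i σ j (a j) = σ (a i) * ∏ j ∈ univ \ {i}, δ j (a j) := by
  simp_rw [Function.apply_update (fun j (x : A j → ℝ) => x (a j))]
  exact prod_update_of_mem (mem_univ i) _ _

omit [Fintype N] [DecidableEq N] in
lemma sum_mul_pureStrat (i : N) (σ : A i → ℝ) (b : A i) :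
    ∑ ai, σ ai * pureStrat i ai b = σ b := by
  simp [pureStrat]

lemma sum_mul_devUtil (u : N → (∀ j, A j) → ℝ) (δ : ∀ i, A i → ℝ) (i : N) :
    ∑ ai, δ i ai * devUtil u δ i ai = expUtil u δ i := by
  simp only [devUtil, expUtil, prod_update_apply, mul_sum]
  rw [sum_comm]
  refine sum_congr rfl fun a _ => ?_
  calc ∑ ai, δ i ai * (pureStrat i ai (a i) * (∏ j ∈ univ \ {i}, δ j (a j)) * u i a)
      = (∑ ai, δ i ai * pureStrat i ai (a i)) * (∏ j ∈ univ \ {i}, δ j (a j)) * u i a := by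
        simp only [sum_mul]; exact sum_congr rfl fun _ _ => by ring
    _ = (∏ j, δ j (a j)) * u i a := by
        rw [sum_mul_pureStrat,
          ← prod_eq_mul_prod_sdiff_singleton_of_mem (mem_univ i) fun j => δ j (a j)]

lemma sub_expUtil_eq_sum_mul (u : N → (∀ j, A j) → ℝ) (δ : ∀ i, A i → ℝ) (i : N)
    (hδ : ∑ ai, δ i ai = 1) (w : ℝ) :
    w - expUtil u δ i = ∑ ai, δ i ai * (w - devUtil u δ i ai) := by
  simp only [mul_sub, sum_sub_distrib, ← sum_mul, hδ, one_mul, sum_mul_devUtil]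

end

/-- For any feasible point of (R), each player's deviation improvement is
bounded by `ϖ · |A_i|`. -/
theorem feasR_player_deviation_bound (u : N → (∀ j, A j) → ℝ)
    (δ : ∀ i, A i → ℝ) (v : N → ℝ) (ϖ : ℝ) (hR : FeasR u δ v ϖ) :
    ∀ i : N,
      Finset.univ.sup' Finset.univ_nonempty (fun ai : A i => devUtil u δ i ai)
        - expUtil u δ i ≤ ϖ * (Fintype.card (A i) : ℝ) := by
  obtain ⟨⟨-, hsum⟩, hfeas⟩ := hR
  intro i
  have hsup : univ.sup' univ_nonempty (fun ai : A i => devUtil u δ i ai) ≤ v i :=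
    sup'_le _ _ fun ai _ => sub_nonneg.mp (hfeas i ai).2.2.1
  calc univ.sup' univ_nonempty (fun ai : A i => devUtil u δ i ai) - expUtil u δ i
      ≤ v i - expUtil u δ i := by gcongr
    _ = ∑ ai, δ i ai * (v i - devUtil u δ i ai) := sub_expUtil_eq_sum_mul u δ i (hsum i) (v i)
    _ ≤ ∑ _ai : A i, ϖ := sum_le_sum fun ai _ => (hfeas i ai).1
    _ = ϖ * (Fintype.card (A i) : ℝ) := by simp [mul_comm]
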